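/- arXiv:1602.04507 — 2 statements merged into one kernel-verified Lean document; each statement's English description precedes it below -/
import Mathlib

section
/- Let D be a superdialgebra over R. Define, for homogeneous a, b ∈ D, the bracket [a,b] := a ⊣ b − (−1)^{|a||b|} b ⊢ a, extended R-bilinearly. Then this bracket respects the grading ([Dα, Dβ] ⊆ D_{α+β}) and satisfies the graded Leibniz identity [x,[y,z]] = [[x,y],z] − (−1)^{|y||z|} [[x,z],y] for all homogeneous x, y, z ∈ D; that is, D with this bracket is a Leibniz superalgebra. -/
/-- The sign `(−1)^{αβ}` for degrees `α β : ℤ/2`, as an integer. -/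
def ssign (α β : ZMod 2) : ℤ := (-1 : ℤ) ^ (α * β).val

/-- An associative superdialgebra over a commutative unital ring `R`:
an `R`-module `D` with a `ℤ/2`-grading `D = D₀ ⊕ D₁` (internal direct sum) and two
`R`-bilinear associative operations `⊣` (here `ld`) and `⊢` (here `rd`) compatible with the
grading and satisfying the three dialgebra axioms. -/
structure Superdialgebra (R : Type*) (D : Type*) [CommRing R] [AddCommGroup D]
    [Module R D] where
  grade : ZMod 2 → Submodule R D
  isInternal : DirectSum.IsInternal grade
  ld : D →ₗ[R] D →ₗ[R] D
  rd : D →ₗ[R] D →ₗ[R] D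
  ld_assoc : ∀ a b c : D, ld (ld a b) c = ld a (ld b c)
  rd_assoc : ∀ a b c : D, rd (rd a b) c = rd a (rd b c)
  ld_mem : ∀ (α β : ZMod 2) (a b : D), a ∈ grade α → b ∈ grade β → ld a b ∈ grade (α + β)
  rd_mem : ∀ (α β : ZMod 2) (a b : D), a ∈ grade α → b ∈ grade β → rd a b ∈ grade (α + β)
  di1 : ∀ a b c : D, ld a (ld b c) = ld a (rd b c)
  di2 : ∀ a b c : D, ld (rd a b) c = rd a (ld b c)
  di3 : ∀ a b c : D, rd (ld a b) c = rd (rd a b) c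

/-- The bracket `[a,b] = a ⊣ b − (−1)^{αβ} b ⊢ a` of elements `a, b` of degrees `α, β`. -/
def sbracket {R D : Type*} [CommRing R] [AddCommGroup D] [Module R D]
    (S : Superdialgebra R D) (α β : ZMod 2) (a b : D) : D :=
  S.ld a b - ssign α β • S.rd b a

/-- A Leibniz superalgebra over a commutative unital ring `R`: an `R`-module with a
`ℤ/2`-grading (internal direct sum) and an `R`-bilinear bracket respecting the grading and
satisfying the graded Leibniz identity on homogeneous elements. -/
structure LeibnizSuperalgebra (R : Type*) (L : Type*) [CommRing R] [AddCommGroup L]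
    [Module R L] where
  grade : ZMod 2 → Submodule R L
  isInternal : DirectSum.IsInternal grade
  bracket : L →ₗ[R] L →ₗ[R] L
  bracket_mem : ∀ (α β : ZMod 2) (x y : L), x ∈ grade α → y ∈ grade β →
    bracket x y ∈ grade (α + β)
  leibniz : ∀ (α β γ : ZMod 2) (x y z : L), x ∈ grade α → y ∈ grade β → z ∈ grade γ →
    bracket x (bracket y z) =
      bracket (bracket x y) z - ssign β γ • bracket (bracket x z) y

/-!
The grading of the bracket is inherited from that of `⊣` and `⊢`. In the Leibniz identity the
degrees enter only through the signs, so it holds for arbitrary elements and degree labels: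
after expanding, associativity and the three dialgebra axioms pair up the monomials, and the
signs match because `(−1)^{αβ}` is multiplicative in each argument. The bilinear bracket is
`[a, b] = a ⊣ b − ∑_{α,β} (−1)^{αβ} b_β ⊢ a_α`, where `x_α` is the degree-`α` component of `x`.
-/

lemma ssign_comm (α β : ZMod 2) : ssign α β = ssign β α := by
  rw [ssign, ssign, mul_comm]

lemma ssign_add_left (α β γ : ZMod 2) : ssign (α + β) γ = ssign α γ * ssign β γ := by
  revert α β γ; decide

lemma ssign_add_right (α β γ : ZMod 2) : ssign α (β + γ) = ssign α β * ssign α γ := by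
  rw [ssign_comm, ssign_add_left, ssign_comm β, ssign_comm γ]

lemma ssign_eq_one_or_neg_one (α β : ZMod 2) : ssign α β = 1 ∨ ssign α β = -1 :=
  neg_one_pow_eq_or ℤ _

namespace DirectSum.IsInternal

variable {ι R M : Type*} [DecidableEq ι] [Semiring R] [AddCommMonoid M] [Module R M]
  {ℳ : ι → Submodule R M}

noncomputable def proj (h : IsInternal ℳ) (i : ι) : M →ₗ[R] M :=
  letI := h.chooseDecomposition
  (ℳ i).subtype ∘ₗ component R ι (fun j => ℳ j) i ∘ₗ (decomposeLinearEquiv ℳ).toLinearMap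

lemma proj_apply_of_mem_same (h : IsInternal ℳ) {i : ι} {x : M} (hx : x ∈ ℳ i) :
    h.proj i x = x :=
  letI := h.chooseDecomposition
  decompose_of_mem_same ℳ hx

lemma proj_apply_of_mem_ne (h : IsInternal ℳ) {i j : ι} {x : M} (hx : x ∈ ℳ i) (hij : i ≠ j) :
    h.proj j x = 0 :=
  letI := h.chooseDecomposition
  decompose_of_mem_ne ℳ hx hij

end DirectSum.IsInternal

namespace Superdialgebra

variable {R D : Type*} [CommRing R] [AddCommGroup D] [Module R D] (S : Superdialgebra R D)

lemma sbracket_mem {α β : ZMod 2} {a b : D} (ha : a ∈ S.grade α) (hb : b ∈ S.grade β) :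
    sbracket S α β a b ∈ S.grade (α + β) := by
  refine (S.grade _).sub_mem (S.ld_mem _ _ _ _ ha hb) (zsmul_mem ?_ _)
  rw [add_comm]
  exact S.rd_mem _ _ _ _ hb ha

lemma sbracket_leibniz (α β γ : ZMod 2) (x y z : D) :
    sbracket S α (β + γ) x (sbracket S β γ y z) =
      sbracket S (α + β) γ (sbracket S α β x y) z -
        ssign β γ • sbracket S (α + γ) β (sbracket S α γ x z) y := by
  simp only [sbracket, map_sub, map_zsmul, LinearMap.sub_apply, LinearMap.smul_apply,
    smul_sub, smul_smul]
  rw [S.ld_assoc x y z, S.ld_assoc x z y, ← S.di1 x z y, S.di2 y x z, S.di2 z x y,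
    ← S.rd_assoc z y x, ← S.rd_assoc y z x, ← S.di3 y z x,
    ssign_add_right, ssign_add_left, ssign_add_left α γ β, ssign_comm γ β]
  rcases ssign_eq_one_or_neg_one β γ with h | h <;> rw [h] <;> module

noncomputable def bracketₗ : D →ₗ[R] D →ₗ[R] D :=
  S.ld - ∑ α : ZMod 2, ∑ β : ZMod 2,
    ssign α β • (S.rd.flip ∘ₗ S.isInternal.proj α).compl₂ (S.isInternal.proj β)

lemma bracketₗ_apply_of_mem {α β : ZMod 2} {a b : D} (ha : a ∈ S.grade α)
    (hb : b ∈ S.grade β) : S.bracketₗ a b = sbracket S α β a b := by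
  simp only [bracketₗ, sbracket, LinearMap.sub_apply, LinearMap.sum_apply,
    LinearMap.smul_apply, LinearMap.compl₂_apply, LinearMap.comp_apply, LinearMap.flip_apply]
  rw [Fintype.sum_eq_single α fun γ hγ => by
      simp [S.isInternal.proj_apply_of_mem_ne ha hγ.symm],
    Fintype.sum_eq_single β fun γ hγ => by
      simp [S.isInternal.proj_apply_of_mem_ne hb hγ.symm],
    S.isInternal.proj_apply_of_mem_same ha, S.isInternal.proj_apply_of_mem_same hb]

noncomputable def toLeibnizSuperalgebra : LeibnizSuperalgebra R D where
  grade := S.grade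
  isInternal := S.isInternal
  bracket := S.bracketₗ
  bracket_mem _ _ _ _ hx hy := by
    rw [S.bracketₗ_apply_of_mem hx hy]
    exact S.sbracket_mem hx hy
  leibniz α β γ x y z hx hy hz := by
    rw [S.bracketₗ_apply_of_mem hy hz, S.bracketₗ_apply_of_mem hx hy,
      S.bracketₗ_apply_of_mem hx hz, S.bracketₗ_apply_of_mem hx (S.sbracket_mem hy hz),
      S.bracketₗ_apply_of_mem (S.sbracket_mem hx hy) hz,
      S.bracketₗ_apply_of_mem (S.sbracket_mem hx hz) hy]
    exact S.sbracket_leibniz α β γ x y z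

end Superdialgebra

/-- for a superdialgebra `D`, the bracket `[a,b] = a ⊣ b − (−1)^{|a||b|} b ⊢ a`
respects the grading, satisfies the graded Leibniz identity on homogeneous elements, and
(extended `R`-bilinearly) turns `D` into a Leibniz superalgebra. -/
theorem superdialgebra_bracket_leibnizSuperalgebra
    {R D : Type*} [CommRing R] [AddCommGroup D] [Module R D] (S : Superdialgebra R D) :
    (∀ (α β : ZMod 2) (a b : D), a ∈ S.grade α → b ∈ S.grade β →
      sbracket S α β a b ∈ S.grade (α + β)) ∧
    (∀ (α β γ : ZMod 2) (x y z : D), x ∈ S.grade α → y ∈ S.grade β → z ∈ S.grade γ →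
      sbracket S α (β + γ) x (sbracket S β γ y z) =
        sbracket S (α + β) γ (sbracket S α β x y) z -
          ssign β γ • sbracket S (α + γ) β (sbracket S α γ x z) y) ∧
    (∃ SL : LeibnizSuperalgebra R D, SL.grade = S.grade ∧
      ∀ (α β : ZMod 2) (a b : D), a ∈ S.grade α → b ∈ S.grade β →
        SL.bracket a b = sbracket S α β a b) :=
  ⟨fun _ _ _ _ => S.sbracket_mem,
    fun α β γ x y z _ _ _ => S.sbracket_leibniz α β γ x y z,
    S.toLeibnizSuperalgebra, rfl, fun _ _ _ _ => S.bracketₗ_apply_of_mem⟩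
end

section
/- Let A be an associative R-algebra and d : A → A an R-linear map satisfying d(ab) = d(a)b + a d(b) for all a, b ∈ A and d ∘ d = 0. Then the two R-bilinear operations x ⊣ y := x · d(y) and x ⊢ y := d(x) · y are both associative and satisfy the three dialgebra axioms: a ⊣ (b ⊣ c) = a ⊣ (b ⊢ c), (a ⊢ b) ⊣ c = a ⊢ (b ⊣ c), and (a ⊣ b) ⊢ c = (a ⊢ b) ⊢ c for all a, b, c ∈ A; that is, (A, ⊣, ⊢) is a dialgebra over R. -/
/-!
Because `d ∘ d = 0`, the Leibniz rule collapses on products with a factor in the image of `d`: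
`d (a · d b) = d a · d b = d (d a · b)`. Together with associativity of `A`, this is all the
dialgebra axioms for `x ⊣ y = x · d y` and `x ⊢ y = d x · y` require.
-/

/-- An associative dialgebra over a commutative unital ring `R`: an `R`-module with two
`R`-bilinear associative operations `⊣` (here `ld`) and `⊢` (here `rd`) satisfying the three
dialgebra axioms. -/
structure Dialgebra (R : Type*) (D : Type*) [CommRing R] [AddCommGroup D] [Module R D] where
  ld : D →ₗ[R] D →ₗ[R] D
  rd : D →ₗ[R] D →ₗ[R] D
  ld_assoc : ∀ a b c : D, ld (ld a b) c = ld a (ld b c)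
  rd_assoc : ∀ a b c : D, rd (rd a b) c = rd a (rd b c)
  di1 : ∀ a b c : D, ld a (ld b c) = ld a (rd b c)
  di2 : ∀ a b c : D, ld (rd a b) c = rd a (ld b c)
  di3 : ∀ a b c : D, rd (ld a b) c = rd (rd a b) c

section SquareZeroDerivation

variable {A : Type*} [NonUnitalNonAssocSemiring A] {d : A → A}

theorem map_mul_map_of_map_map_eq_zero (hder : ∀ a b : A, d (a * b) = d a * b + a * d b)
    (hd2 : ∀ a : A, d (d a) = 0) (a b : A) : d (a * d b) = d a * d b := by
  rw [hder, hd2, mul_zero, add_zero]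

theorem map_map_mul_of_map_map_eq_zero (hder : ∀ a b : A, d (a * b) = d a * b + a * d b)
    (hd2 : ∀ a : A, d (d a) = 0) (a b : A) : d (d a * b) = d a * d b := by
  rw [hder, hd2, zero_mul, zero_add]

end SquareZeroDerivation

def Dialgebra.ofSquareZeroDerivation {R A : Type*} [CommRing R] [Ring A] [Algebra R A]
    (d : A →ₗ[R] A) (hder : ∀ a b : A, d (a * b) = d a * b + a * d b)
    (hd2 : ∀ a : A, d (d a) = 0) : Dialgebra R A where
  ld := (LinearMap.mul R A).compl₂ d
  rd := LinearMap.mul R A ∘ₗ d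
  ld_assoc a b c := by
    simp only [LinearMap.compl₂_apply, LinearMap.mul_apply',
      map_mul_map_of_map_map_eq_zero hder hd2, mul_assoc]
  rd_assoc a b c := by
    simp only [LinearMap.comp_apply, LinearMap.mul_apply',
      map_map_mul_of_map_map_eq_zero hder hd2, mul_assoc]
  di1 a b c := by
    simp only [LinearMap.compl₂_apply, LinearMap.comp_apply, LinearMap.mul_apply',
      map_mul_map_of_map_map_eq_zero hder hd2, map_map_mul_of_map_map_eq_zero hder hd2]
  di2 a b c := mul_assoc (d a) b (d c)
  di3 a b c := by
    simp only [LinearMap.compl₂_apply, LinearMap.comp_apply, LinearMap.mul_apply',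
      map_mul_map_of_map_map_eq_zero hder hd2, map_map_mul_of_map_map_eq_zero hder hd2]

/-- a differential associative `R`-algebra `(A, d)` becomes a dialgebra with
`x ⊣ y = x·d(y)` and `x ⊢ y = d(x)·y`: both operations are associative and the three
dialgebra axioms hold. -/
theorem differential_algebra_dialgebra
    {R A : Type*} [CommRing R] [Ring A] [Algebra R A] (d : A →ₗ[R] A)
    (hder : ∀ a b : A, d (a * b) = d a * b + a * d b)
    (hd2 : ∀ a : A, d (d a) = 0) :
    (∀ a b c : A, (a * d b) * d c = a * d (b * d c)) ∧
    (∀ a b c : A, d (d a * b) * c = d a * (d b * c)) ∧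
    (∀ a b c : A, a * d (b * d c) = a * d (d b * c)) ∧
    (∀ a b c : A, (d a * b) * d c = d a * (b * d c)) ∧
    (∀ a b c : A, d (a * d b) * c = d (d a * b) * c) ∧
    (∃ T : Dialgebra R A,
      (∀ x y : A, T.ld x y = x * d y) ∧ (∀ x y : A, T.rd x y = d x * y)) := by
  let T := Dialgebra.ofSquareZeroDerivation d hder hd2
  exact ⟨T.ld_assoc, T.rd_assoc, T.di1, T.di2, T.di3, T, fun _ _ => rfl, fun _ _ => rfl⟩
end
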